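/- arXiv:1004.1482 — 9 statements merged into one kernel-verified Lean document; each statement's English description precedes it below -/
import Mathlib

section
/- Let F be a finite field of characteristic 2 with Q elements, let k be an integer with 0 ≤ k ≤ Q-2, and let n > 0 be an integer written as n = (Q-1)·s + r with s ≥ 0 and 0 ≤ r ≤ Q-2. Then, as elements of F, the sum over all nonzero α in F of (1+α)^n · α^(Q-1-k) equals the image in F of the natural number Σ_{j=0}^{s} C(n, (Q-1)·j + k) (equivalently, it is 1 or 0 in F according to whether Σ_{j=0}^{s} C(n, (Q-1)·j + k) is odd or even). -/
/-!
Expanding `(1 + α)^n` binomially reduces the sum to the power sums `∑_{α ≠ 0} α^m`, which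
vanish unless `Q - 1 ∣ m`, in which case they equal `-1 = 1`. The surviving binomial
coefficients `C(n, i)` are those with `i ≡ k (mod Q - 1)` and `i ≤ n`, i.e. `i = (Q - 1)j + k`
with `j ≤ s`, because `n < (Q - 1)(s + 1)`.
-/

open Finset

theorem Nat.sum_choose_filter_dvd_add_sub {d k n s : ℕ} (hk : k < d) (hn : n < d * (s + 1)) :
    ∑ i ∈ (range (n + 1)).filter (fun i => d ∣ i + (d - k)), n.choose i =
      ∑ j ∈ range (s + 1), n.choose (d * j + k) := by
  have hinj : Set.InjOn (fun j => d * j + k) (range (s + 1)) := fun a _ b _ h =>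
    Nat.eq_of_mul_eq_mul_left (by omega : 0 < d) (by simpa using h)
  rw [← sum_image hinj]
  refine sum_subset (fun i hi => ?_) (fun i hi hi' => ?_)
  · obtain ⟨hin, c, hc⟩ := by simpa only [mem_filter, mem_range] using hi
    obtain _ | j := c
    · omega
    have hij : i = d * j + k := by rw [mul_add_one] at hc; omega
    have hj : j < s + 1 := Nat.lt_of_mul_lt_mul_left (a := d) (by omega)
    exact mem_image.mpr ⟨j, mem_range.mpr hj, hij.symm⟩
  · obtain ⟨j, -, rfl⟩ := mem_image.mp hi
    have hdvd : d ∣ d * j + k + (d - k) := ⟨j + 1, by rw [mul_add_one]; omega⟩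
    have hlt : n < d * j + k := by simpa [mem_filter, hdvd] using hi'
    exact Nat.choose_eq_zero_of_lt hlt

namespace FiniteField

variable {F : Type*} [Field F] [Fintype F] [DecidableEq F]

theorem sum_ne_zero_pow (m : ℕ) :
    ∑ α ∈ univ.filter (· ≠ (0 : F)), α ^ m = if Fintype.card F - 1 ∣ m then -1 else 0 := by
  rw [← sum_pow_units, sum_subtype _ (p := (· ≠ 0)) (fun α => by simp)]
  exact (Fintype.sum_equiv unitsEquivNeZero _ _ fun _ => rfl).symm

theorem sum_ne_zero_one_add_pow_mul_pow (n t : ℕ) :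
    ∑ α ∈ univ.filter (· ≠ (0 : F)), (1 + α) ^ n * α ^ t =
      -∑ i ∈ (range (n + 1)).filter (fun i => Fintype.card F - 1 ∣ i + t), (n.choose i : F) := by
  have hexpand : ∀ α : F, (1 + α) ^ n * α ^ t = ∑ i ∈ range (n + 1), n.choose i * α ^ (i + t) :=
    fun α => by
      rw [add_comm, add_pow, sum_mul]
      exact sum_congr rfl fun i _ => by ring
  simp_rw [hexpand]
  rw [sum_comm, sum_filter, ← sum_neg_distrib]
  refine sum_congr rfl fun i _ => ?_
  rw [← mul_sum, sum_ne_zero_pow]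
  split_ifs <;> simp

end FiniteField

theorem field_power_sum_eq_choose_sum_general (F : Type*) [Field F] [Fintype F] [DecidableEq F]
    (hchar : CharP F 2) (Q : ℕ) (hQ : Fintype.card F = Q)
    (k n s r : ℕ) (hk : k ≤ Q - 2) (hr : r ≤ Q - 2)
    (hnsr : n = (Q - 1) * s + r) :
    (∑ α ∈ Finset.univ.filter (fun α : F => α ≠ 0), (1 + α) ^ n * α ^ (Q - 1 - k)) =
      ((∑ j ∈ Finset.range (s + 1), Nat.choose n ((Q - 1) * j + k) : ℕ) : F) := by
  have hQ2 : 2 ≤ Q := hQ ▸ Fintype.one_lt_card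
  have hn : n < (Q - 1) * (s + 1) := by rw [hnsr, mul_add_one]; omega
  rw [FiniteField.sum_ne_zero_one_add_pow_mul_pow, hQ, CharTwo.neg_eq,
    ← Nat.sum_choose_filter_dvd_add_sub (by omega) hn, Nat.cast_sum]

/-- Power-sum identity in a finite field of characteristic 2: for `|F| = Q`,
`0 ≤ k ≤ Q-2`, and `n = (Q-1)s + r > 0` with `0 ≤ r ≤ Q-2`, the sum over nonzero
`α ∈ F` of `(1+α)^n · α^(Q-1-k)` equals the image in `F` of
`∑_{j=0}^{s} C(n, (Q-1)j + k)`. -/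
theorem field_power_sum_eq_choose_sum (F : Type*) [Field F] [Fintype F] [DecidableEq F]
    (hchar : CharP F 2) (Q : ℕ) (hQ : Fintype.card F = Q)
    (k n s r : ℕ) (hk : k ≤ Q - 2) (hn : 0 < n) (hr : r ≤ Q - 2)
    (hnsr : n = (Q - 1) * s + r) :
    (∑ α ∈ Finset.univ.filter (fun α : F => α ≠ 0), (1 + α) ^ n * α ^ (Q - 1 - k)) =
      ((∑ j ∈ Finset.range (s + 1), Nat.choose n ((Q - 1) * j + k) : ℕ) : F) :=
  field_power_sum_eq_choose_sum_general F hchar Q hQ k n s r hk hr hnsr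
end

section
/- Let h ≥ 1, set q = 2^h, and let s be an integer with 1 ≤ s ≤ h. Then the binomial coefficient C(3q - 2^(s-1) - 1, q + 2^(s-1) - 1) is even. -/
/-!
Write `q = 2 ^ h` and `t = s - 1`, so `2 ^ t < q`. The top entry `3q - 2^t - 1` lies in `[2q, 3q)` and
the bottom entry `q + 2^t - 1` in `[q, 2q)`, so their leading base-`q` digits are `2` and `1`. By
Lucas's theorem the binomial coefficient is then divisible by `C(2, 1) = 2`.
-/

theorem Nat.Prime.dvd_choose_of_dvd_choose_div_pow {p n k : ℕ} (hp : p.Prime) (a : ℕ)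
    (h : p ∣ choose (n / p ^ a) (k / p ^ a)) : p ∣ choose n k := by
  have : Fact p.Prime := ⟨hp⟩
  have hdvd : (p : ℤ) ∣ choose (n / p ^ a) (k / p ^ a) := Int.natCast_dvd_natCast.mpr h
  rw [← Int.natCast_dvd_natCast, ← Int.modEq_zero_iff_dvd]
  exact (Choose.choose_modEq_choose_mul_prod_range_choose a).trans
    (Int.modEq_zero_iff_dvd.mpr (dvd_mul_of_dvd_left hdvd _))

theorem choose_even_first_general (h s q : ℕ) (hq : q = 2 ^ h) (hs1 : 1 ≤ s) (hsh : s ≤ h) :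
    Even (Nat.choose (3 * q - 2 ^ (s - 1) - 1) (q + 2 ^ (s - 1) - 1)) := by
  obtain ⟨t, rfl⟩ : ∃ t, s = t + 1 := ⟨s - 1, by omega⟩
  have ht : 2 ^ t < q := hq ▸ Nat.pow_lt_pow_right one_lt_two (by omega)
  have ht₀ : 1 ≤ 2 ^ t := Nat.one_le_two_pow
  rw [Nat.add_sub_cancel, even_iff_two_dvd]
  apply Nat.prime_two.dvd_choose_of_dvd_choose_div_pow h
  rw [← hq, Nat.div_eq_of_lt_le (k := 2) (by omega) (by omega),
    Nat.div_eq_of_lt_le (k := 1) (by omega) (by omega)]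
  decide

/-- For `q = 2^h`, `1 ≤ s ≤ h`, the binomial coefficient
`C(3q - 2^(s-1) - 1, q + 2^(s-1) - 1)` is even. -/
theorem choose_even_first (h s q : ℕ) (hh : 1 ≤ h) (hq : q = 2 ^ h) (hs1 : 1 ≤ s) (hsh : s ≤ h) :
    Even (Nat.choose (3 * q - 2 ^ (s - 1) - 1) (q + 2 ^ (s - 1) - 1)) :=
  choose_even_first_general h s q hq hs1 hsh
end

section
/- Let h ≥ 1 and let s be an integer with 1 ≤ s ≤ h. Then C(2^(h+2) - 2^s, 2^(h+1)) is odd, while both C(2^(h+2) - 2^s, 2^(h+1) - 1) and C(2^(h+2) - 2^s, 2^(h+1) + 1) are even. -/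
/-!
Write `2^(h+2) - 2^s = 2^s (2^m - 1)` and `2^(h+1) = 2^s · 2^(m-1)` with `m = h + 2 - s`.
Modulo 2, scaling both arguments of a binomial coefficient by `2^s` does not change it
(Lucas), and every `C(2^m - 1, j)` is odd (Pascal's rule, since `C(2^m, j)` is even for
`0 < j < 2^m`), which gives the odd coefficient. The two neighbours
`2^(h+1) ∓ 1` are odd while `2^(h+2) - 2^s` is even, and `C(n, k)` is even whenever `n` is even
and `k` is odd (Lucas again: the last binary digits contribute `C(0, 1) = 0`).
-/

namespace Nat

theorem odd_choose_two_pow_sub_one {m j : ℕ} (hj : j < 2 ^ m) : Odd ((2 ^ m - 1).choose j) := by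
  induction j with
  | zero => simp
  | succ j ih =>
    have hpascal : (2 ^ m).choose (j + 1) = (2 ^ m - 1).choose j + (2 ^ m - 1).choose (j + 1) := by
      rw [← choose_succ_succ', Nat.sub_add_cancel Nat.one_le_two_pow]
    have heven : Even ((2 ^ m).choose (j + 1)) :=
      even_iff_two_dvd.mpr (prime_two.dvd_choose_pow j.succ_ne_zero hj.ne)
    rw [hpascal, Nat.even_add] at heven
    exact Nat.not_even_iff_odd.mp fun hodd ↦
      Nat.not_even_iff_odd.mpr (ih (by omega)) (heven.mpr hodd)

theorem even_choose_of_even_of_odd {n k : ℕ} (hn : Even n) (hk : Odd k) : Even (n.choose k) := by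
  have hlucas := Choose.choose_modEq_choose_mod_mul_choose_div_nat (n := n) (k := k) (p := 2)
  rw [Nat.even_iff.mp hn, Nat.odd_iff.mp hk, choose_zero_succ, zero_mul] at hlucas
  exact Nat.even_iff.mpr hlucas

end Nat

open Nat

theorem choose_parity_triple_general (h s : ℕ) (hs1 : 1 ≤ s) (hsh : s ≤ h) :
    Odd (Nat.choose (2 ^ (h + 2) - 2 ^ s) (2 ^ (h + 1))) ∧
    Even (Nat.choose (2 ^ (h + 2) - 2 ^ s) (2 ^ (h + 1) - 1)) ∧
    Even (Nat.choose (2 ^ (h + 2) - 2 ^ s) (2 ^ (h + 1) + 1)) := by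
  have hn : 2 ^ (h + 2) - 2 ^ s = 2 ^ s * (2 ^ (h + 2 - s) - 1) := by
    rw [Nat.mul_sub, mul_one, ← pow_add, Nat.add_sub_cancel' (by omega)]
  have hk : 2 ^ (h + 1) = 2 ^ s * 2 ^ (h + 1 - s) := by
    rw [← pow_add, Nat.add_sub_cancel' (by omega)]
  have hn_even : Even (2 ^ (h + 2) - 2 ^ s) := by
    rw [hn, Nat.even_mul, Nat.even_pow]
    exact Or.inl ⟨even_two, by omega⟩
  have hk_even : Even (2 ^ (h + 1)) := Nat.even_pow.mpr ⟨even_two, by omega⟩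
  refine ⟨?_, even_choose_of_even_of_odd hn_even ?_,
    even_choose_of_even_of_odd hn_even hk_even.add_one⟩
  · rw [Nat.odd_iff, hn, hk, Choose.choose_pow_mul_pow_mul_modEq_choose_nat, ← Nat.odd_iff]
    exact odd_choose_two_pow_sub_one (Nat.pow_lt_pow_right one_lt_two (by omega))
  · exact Nat.Even.sub_odd Nat.one_le_two_pow hk_even odd_one

/-- For `1 ≤ s ≤ h`: `C(2^(h+2) - 2^s, 2^(h+1))` is odd, while
`C(2^(h+2) - 2^s, 2^(h+1) - 1)` and `C(2^(h+2) - 2^s, 2^(h+1) + 1)` are even. -/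
theorem choose_parity_triple (h s : ℕ) (hh : 1 ≤ h) (hs1 : 1 ≤ s) (hsh : s ≤ h) :
    Odd (Nat.choose (2 ^ (h + 2) - 2 ^ s) (2 ^ (h + 1))) ∧
    Even (Nat.choose (2 ^ (h + 2) - 2 ^ s) (2 ^ (h + 1) - 1)) ∧
    Even (Nat.choose (2 ^ (h + 2) - 2 ^ s) (2 ^ (h + 1) + 1)) :=
  choose_parity_triple_general h s hs1 hsh
end

section
/- Let g ≥ 1, h ≥ 1, s ≥ 0 be integers, set d = 2^(g+h+1) - 2 and N = d·s + 2^(g+h) + 2^(h+1) - 2. Then Σ_{j=0}^{2^(g-1) - 1} C(N, 2^(h+1)·j) + Σ_{l=0}^{s-1} Σ_{j=0}^{2^g - 2} C(N, d·l + 2^(g+h) + 2^(h+1)·(j+1) - 2) ≡ 1 (mod 2). -/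
/-!
Modulo 2, `C(n, k)` is the coefficient of `X ^ k` in `(1 + X) ^ n`. With `m = 2 ^ (h + 1)`,
`a = 2 ^ (g - 1)` and `Q = ∑_{i < 2a - 1} X ^ (m i)`, the left-hand side plus one is the sum of the
coefficients of `(1 + X) ^ N * Q` at the exponents `≡ m (a - 1) (mod d)`, the extra one being its
leading coefficient. Such a sum only depends on the image in `𝔽₂[X] / (X ^ d - 1)`, where
`(1 + X) ^ (d + 2) = 1 + X ^ (d + 2) = (1 + X) ^ 2`. So it does not change when `N` is lowered by
`d`, and the case `s = 0` is a direct computation.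
-/

open Finset

namespace Polynomial

section Semiring

variable {R : Type*} [Semiring R]

/-- The sum of the coefficients of `p` at the exponents `n` with `n % d = c`; for `c < d` this is
the coefficient of `X ^ c` of the image of `p` in `R[X] / (X ^ d - 1)`. -/
def residueCoeffSum (d c : ℕ) : R[X] →ₗ[R] R :=
  lsum fun n => if n % d = c then LinearMap.id else 0

theorem residueCoeffSum_X_pow_mul (d c : ℕ) (p : R[X]) :
    residueCoeffSum d c (X ^ d * p) = residueCoeffSum d c p := by
  induction p using Polynomial.induction_on' with
  | add p q hp hq => rw [mul_add, map_add, map_add, hp, hq]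
  | monomial n a => simp [residueCoeffSum, X_pow_mul_monomial, Nat.add_mod_right]

theorem residueCoeffSum_eq_sum_range {d c L : ℕ} (hc : c < d) {p : R[X]}
    (hp : p.natDegree < d * L) :
    residueCoeffSum d c p = ∑ l ∈ range L, p.coeff (d * l + c) := by
  have hfilter : (range (d * L)).filter (· % d = c) = (range L).image (d * · + c) := by
    ext n
    simp only [mem_filter, mem_range, mem_image]
    constructor
    · rintro ⟨hn, rfl⟩
      exact ⟨n / d, Nat.div_lt_of_lt_mul hn, Nat.div_add_mod n d⟩
    · rintro ⟨l, hl, rfl⟩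
      refine ⟨?_, by simp [Nat.mod_eq_of_lt hc]⟩
      nlinarith
  rw [residueCoeffSum, lsum_apply, sum_over_range' p (by simp) _ hp]
  simp only [apply_ite DFunLike.coe, ite_apply, LinearMap.id_apply, LinearMap.zero_apply]
  rw [← sum_filter, hfilter, sum_image fun x _ y _ h => by
    have hd : 0 < d := by omega
    simpa [hd.ne'] using h]

theorem coeff_mul_sum_X_pow (p : R[X]) (m r k : ℕ) :
    (p * ∑ i ∈ range r, X ^ (m * i)).coeff k =
      ∑ i ∈ range r, if m * i ≤ k then p.coeff (k - m * i) else 0 := by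
  simp [mul_sum, coeff_mul_X_pow']

theorem coeff_mul_sum_X_pow_add (p : R[X]) (m r c : ℕ) :
    (p * ∑ i ∈ range r, X ^ (m * i)).coeff (c + m * (r - 1)) =
      ∑ i ∈ range r, p.coeff (c + m * i) := by
  rw [coeff_mul_sum_X_pow, ← sum_range_reflect]
  refine sum_congr rfl fun i hi => ?_
  have : m * (r - 1 - i) + m * i = m * (r - 1) := by
    rw [← mul_add]; congr 1; have := mem_range.mp hi; omega
  rw [if_pos (by omega)]
  congr 1
  omega

theorem coeff_mul_sum_X_pow_of_lt (p : R[X]) {m c : ℕ} (hc : c < m) (a b : ℕ) :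
    (p * ∑ i ∈ range (a + 1 + b), X ^ (m * i)).coeff (c + m * a) =
      ∑ i ∈ range (a + 1), p.coeff (c + m * i) := by
  have hfar : ∀ i, ¬ m * (a + 1 + i) ≤ c + m * a := fun i => by
    rw [mul_add, mul_add, mul_one]; omega
  rw [coeff_mul_sum_X_pow, sum_range_add, sum_eq_zero fun i _ => if_neg (hfar i), add_zero,
    ← coeff_mul_sum_X_pow, ← coeff_mul_sum_X_pow_add, Nat.add_sub_cancel]

end Semiring

section CharTwo

variable {R : Type*} [CommSemiring R] [ExpChar R 2]

theorem residueCoeffSum_one_add_X_pow_add_two {d k : ℕ} (hd : d + 2 = 2 ^ k) (c : ℕ)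
    (p : R[X]) :
    residueCoeffSum d c ((1 + X) ^ (d + 2) * p) = residueCoeffSum d c ((1 + X) ^ 2 * p) := by
  rw [hd, add_pow_expChar_pow, add_pow_expChar, one_pow, one_pow, ← hd, pow_add, add_mul,
    add_mul, mul_assoc, map_add, map_add, residueCoeffSum_X_pow_mul]

theorem residueCoeffSum_one_add_X_pow_mul_add {d k : ℕ} (hd : d + 2 = 2 ^ k) (c : ℕ)
    (p : R[X]) (s : ℕ) {n : ℕ} (hn : 2 ≤ n) :
    residueCoeffSum d c ((1 + X) ^ (d * s + n) * p) = residueCoeffSum d c ((1 + X) ^ n * p) := by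
  induction s with
  | zero => rw [mul_zero, zero_add]
  | succ s ih =>
    rw [show d * (s + 1) + n = d + 2 + (d * s + n - 2) by rw [mul_add_one]; omega, pow_add,
      mul_assoc, residueCoeffSum_one_add_X_pow_add_two hd, ← mul_assoc, ← pow_add,
      show 2 + (d * s + n - 2) = d * s + n by omega, ih]

theorem natCast_choose_two_pow_add {t k : ℕ} (hk : k < 2 ^ t) (b : ℕ) :
    ((2 ^ t + b).choose k : R) = b.choose k := by
  rw [← coeff_one_add_X_pow, ← coeff_one_add_X_pow, pow_add, add_pow_expChar_pow, one_pow,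
    add_mul, one_mul, coeff_add, coeff_X_pow_mul', if_neg (by omega), add_zero]

end CharTwo

end Polynomial

open Polynomial

theorem sum_choose_add_one_eq_residueCoeffSum {R : Type*} [Semiring R] {m a d : ℕ} (hm : 2 ≤ m)
    (ha : 1 ≤ a) (hd : d + 2 = 2 * (m * a)) (s : ℕ) :
    ((∑ j ∈ range a, ((d * s + (m * a + m - 2)).choose (m * j) : R)) +
      ∑ l ∈ range s, ∑ j ∈ range (2 * a - 1),
        ((d * s + (m * a + m - 2)).choose (d * l + m * a + m * (j + 1) - 2) : R)) + 1 =
    residueCoeffSum d (m * (a - 1))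
      ((1 + X) ^ (d * s + (m * a + m - 2)) * ∑ i ∈ range (2 * a - 1), X ^ (m * i)) := by
  set n := d * s + (m * a + m - 2)
  set G : R[X] := (1 + X) ^ n * ∑ i ∈ range (2 * a - 1), X ^ (m * i)
  have hK : m * (a - 1) = m * a - m := Nat.mul_sub_one m a
  have hQ : m * (2 * a - 1 - 1) = 2 * (m * a) - 2 * m := by
    rw [show 2 * a - 1 - 1 = 2 * (a - 1) by omega, mul_left_comm, hK, Nat.mul_sub]
  have hma : m ≤ m * a := Nat.le_mul_of_pos_right m ha
  have hdeg : G.natDegree < d * (s + 2) := by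
    have hQdeg : (∑ i ∈ range (2 * a - 1), (X : R[X]) ^ (m * i)).natDegree ≤ m * (2 * a - 1 - 1) :=
      natDegree_sum_le_of_forall_le _ _ fun i hi =>
        (natDegree_X_pow_le _).trans (Nat.mul_le_mul_left m (by have := mem_range.mp hi; omega))
    have h1X : ((1 : R[X]) + X).natDegree ≤ 1 :=
      (natDegree_add_le _ _).trans (max_le (by simp) natDegree_X_le)
    calc G.natDegree ≤ n * 1 + m * (2 * a - 1 - 1) :=
          natDegree_mul_le_of_le (natDegree_pow_le_of_le n h1X) hQdeg
      _ < d * (s + 2) := by rw [mul_add]; omega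
  have hlow : G.coeff (d * 0 + m * (a - 1)) = ∑ j ∈ range a, (n.choose (m * j) : R) := by
    have := coeff_mul_sum_X_pow_of_lt ((1 + X : R[X]) ^ n) (by omega : 0 < m) (a - 1) (a - 1)
    rw [show a - 1 + 1 + (a - 1) = 2 * a - 1 by omega, Nat.sub_add_cancel ha] at this
    simpa only [mul_zero, zero_add, coeff_one_add_X_pow] using this
  have hmid : ∀ l, G.coeff (d * (l + 1) + m * (a - 1)) =
      ∑ j ∈ range (2 * a - 1), (n.choose (d * l + m * a + m * (j + 1) - 2) : R) := by
    intro l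
    rw [show d * (l + 1) + m * (a - 1) = (d * l + m * a + m - 2) + m * (2 * a - 1 - 1) by
      rw [mul_add_one]; omega, coeff_mul_sum_X_pow_add]
    refine sum_congr rfl fun j _ => ?_
    rw [coeff_one_add_X_pow, mul_add_one]
    congr 2
    omega
  have htop : G.coeff (d * (s + 1) + m * (a - 1)) = 1 := by
    rw [show d * (s + 1) + m * (a - 1) = n + m * (2 * a - 1 - 1) by
      rw [mul_add_one]; omega, coeff_mul_sum_X_pow_add,
      sum_eq_single_of_mem 0 (mem_range.mpr (by omega)) fun i _ hi => ?_]
    · simp [coeff_one_add_X_pow]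
    · have : 0 < m * i := Nat.mul_pos (by omega) (Nat.pos_of_ne_zero hi)
      rw [coeff_one_add_X_pow, Nat.choose_eq_zero_of_lt (by omega), Nat.cast_zero]
  rw [residueCoeffSum_eq_sum_range (by omega) hdeg, sum_range_succ, sum_range_succ', hlow, htop,
    sum_congr rfl fun l _ => hmid l]
  abel

theorem sum_choose_mul_eq_one {R : Type*} [CommSemiring R] [ExpChar R 2] {m a t : ℕ}
    (hm : 2 ≤ m) (hma : m * a = 2 ^ t) :
    ∑ j ∈ range a, ((m * a + m - 2).choose (m * j) : R) = 1 := by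
  have ha : 0 < a := Nat.pos_of_mul_pos_left (hma ▸ Nat.two_pow_pos t)
  rw [sum_eq_single_of_mem 0 (mem_range.mpr ha) fun j hj hj0 => ?_]
  · simp
  · have hlt : m * j < 2 ^ t := hma ▸ Nat.mul_lt_mul_of_pos_left (mem_range.mp hj) (by omega)
    have hle : m ≤ m * j := Nat.le_mul_of_pos_right m (Nat.pos_of_ne_zero hj0)
    rw [Nat.add_sub_assoc hm, hma, natCast_choose_two_pow_add hlt,
      Nat.choose_eq_zero_of_lt (by omega), Nat.cast_zero]

theorem S_sum_odd_general (g h s d N : ℕ) (hg : 1 ≤ g)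
    (hd : d = 2 ^ (g + h + 1) - 2) (hN : N = d * s + 2 ^ (g + h) + 2 ^ (h + 1) - 2) :
    (∑ j ∈ Finset.range (2 ^ (g - 1)), Nat.choose N (2 ^ (h + 1) * j)) +
      (∑ l ∈ Finset.range s, ∑ j ∈ Finset.range (2 ^ g - 1),
        Nat.choose N (d * l + 2 ^ (g + h) + 2 ^ (h + 1) * (j + 1) - 2)) ≡ 1 [MOD 2] := by
  set m := 2 ^ (h + 1)
  set a := 2 ^ (g - 1)
  have hma : m * a = 2 ^ (g + h) := by rw [← pow_add]; congr 1; omega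
  have h2a : 2 * a = 2 ^ g := by rw [← pow_succ']; congr 1; omega
  have hm : 2 ≤ m := Nat.le_self_pow (by omega) 2
  have hd₂ : d + 2 = 2 ^ (g + h + 1) := by
    have := Nat.le_self_pow (n := g + h + 1) (by omega) 2; omega
  have hdma : d + 2 = 2 * (m * a) := by rw [hd₂, hma, pow_succ']
  have ha : 1 ≤ a := Nat.one_le_two_pow
  clear_value m a
  obtain rfl : N = d * s + (m * a + m - 2) := by rw [hN, hma]; omega
  rw [← hma, ← h2a, ← ZMod.natCast_eq_natCast_iff]
  push_cast
  have key := sum_choose_add_one_eq_residueCoeffSum (R := ZMod 2) hm ha hdma s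
  have key₀ := sum_choose_add_one_eq_residueCoeffSum (R := ZMod 2) hm ha hdma 0
  have hn₀ : 2 ≤ m * a + m - 2 := by have := Nat.le_mul_of_pos_right m ha; omega
  rw [residueCoeffSum_one_add_X_pow_mul_add hd₂ _ _ _ hn₀] at key
  simp only [mul_zero, zero_add, range_zero, sum_empty, add_zero,
    sum_choose_mul_eq_one hm hma] at key₀
  exact add_right_cancel (key.trans key₀.symm)

/-- For `g, h ≥ 1`, `s ≥ 0`, `d = 2^(g+h+1) - 2` and `N = ds + 2^(g+h) + 2^(h+1) - 2`:
`∑_{j=0}^{2^(g-1)-1} C(N, 2^(h+1) j)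
 + ∑_{l=0}^{s-1} ∑_{j=0}^{2^g-2} C(N, dl + 2^(g+h) + 2^(h+1)(j+1) - 2) ≡ 1 (mod 2)`. -/
theorem S_sum_odd (g h s d N : ℕ) (hg : 1 ≤ g) (hh : 1 ≤ h)
    (hd : d = 2 ^ (g + h + 1) - 2) (hN : N = d * s + 2 ^ (g + h) + 2 ^ (h + 1) - 2) :
    (∑ j ∈ Finset.range (2 ^ (g - 1)), Nat.choose N (2 ^ (h + 1) * j)) +
      (∑ l ∈ Finset.range s, ∑ j ∈ Finset.range (2 ^ g - 1),
        Nat.choose N (d * l + 2 ^ (g + h) + 2 ^ (h + 1) * (j + 1) - 2)) ≡ 1 [MOD 2] :=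
  S_sum_odd_general g h s d N hg hd hN
end

section
/- Let g ≥ 1, h ≥ 1, s ≥ 1 be integers and set d = 2^(g+h+1) - 2. Then Σ_{l=1}^{s} Σ_{j=1}^{2^g - 2} C(d·s + 2^(h+1) - 1, d·l - 2^(h+1)·j) ≡ 0 (mod 2). (For the indicated ranges of l and j the lower entry d·l - 2^(h+1)·j is a positive integer.) -/
/-!
Write `A = 2^g` and `B = 2^(h+1)`, so that `d + 2 = A * B` and `n = d s + B - 1` is odd.
The reflection `(l, j) ↦ (s + 1 - l, A - 1 - j)` is a fixed-point-free involution of the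
index set (`A` is even), and the lower indices `k, k'` of two paired terms satisfy
`k + k' + 1 = n` with `k'` even. Hence
`C(n, k) + C(n, k') = C(n, k' + 1) + C(n, k') = C(n + 1, k' + 1)`,
which is even because `n + 1` is even and `k' + 1` is odd.
-/

open Finset

theorem Nat.even_choose_of_even_of_odd_s7 {n k : ℕ} (hn : Even n) (hk : Odd k) :
    Even (n.choose k) := by
  obtain ⟨k, rfl⟩ : ∃ k', k = k' + 1 := ⟨k - 1, by grind⟩
  rcases n with _ | m
  · simp
  have h := Nat.add_one_mul_choose_eq m k
  have : Even ((m + 1).choose (k + 1) * (k + 1)) := h ▸ hn.mul_right _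
  exact (Nat.even_mul.mp this).resolve_right (Nat.not_even_iff_odd.mpr hk)

theorem Nat.even_choose_add_choose {n a b : ℕ} (hn : Odd n) (hb : Even b) (hab : a + b + 1 = n) :
    Even (n.choose a + n.choose b) := by
  have hsymm : n.choose a = n.choose (b + 1) := by
    rw [← Nat.choose_symm (by omega : a ≤ n), show n - a = b + 1 by omega]
  rw [hsymm, add_comm, ← Nat.choose_succ_succ]
  exact Nat.even_choose_of_even_of_odd_s7 hn.add_one hb.add_one

theorem Finset.even_sum_of_involution {ι : Type*} {s : Finset ι} {f : ι → ℕ} (σ : ι → ι)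
    (hmem : ∀ i ∈ s, σ i ∈ s) (hinv : ∀ i ∈ s, σ (σ i) = i) (hne : ∀ i ∈ s, σ i ≠ i)
    (hpair : ∀ i ∈ s, Even (f i + f (σ i))) : Even (∑ i ∈ s, f i) := by
  rw [← ZMod.natCast_eq_zero_iff_even, Nat.cast_sum]
  refine Finset.sum_involution (fun i _ => σ i) (fun i hi => ?_) (fun i hi _ => hne i hi) hmem hinv
  exact_mod_cast (ZMod.natCast_eq_zero_iff_even).mpr (hpair i hi)

section

variable {A B d : ℕ}

theorem pos_of_add_two_eq_mul (hAB : d + 2 = A * B) : 0 < B :=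
  Nat.pos_of_mul_pos_left (hAB ▸ Nat.add_pos_right d two_pos)

theorem mul_le_mul_of_add_two_eq_mul (hAB : d + 2 = A * B) {l j : ℕ} (hl : 1 ≤ l) (hj : j + 2 ≤ A) :
    B * j ≤ d * l := by
  have hB := pos_of_add_two_eq_mul hAB
  have : B * (j + 2) ≤ B * A := Nat.mul_le_mul_left B hj
  have : d ≤ d * l := Nat.le_mul_of_pos_right d hl
  nlinarith

theorem lower_index_add_reflect_add_one (hAB : d + 2 = A * B) {s l j : ℕ} (hl : l ∈ Icc 1 s)
    (hj : j ∈ Icc 1 (A - 2)) :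
    (d * l - B * j) + (d * (s + 1 - l) - B * (A - 1 - j)) + 1 = d * s + B - 1 := by
  simp only [mem_Icc] at hl hj
  have h₁ := mul_le_mul_of_add_two_eq_mul hAB (l := l) (j := j) (by omega) (by omega)
  have h₂ := mul_le_mul_of_add_two_eq_mul hAB (l := s + 1 - l) (j := A - 1 - j) (by omega) (by omega)
  have hB := pos_of_add_two_eq_mul hAB
  zify [h₁, h₂, (by omega : l ≤ s + 1), (by omega : j ≤ A - 1), (by omega : 1 ≤ A),
    (by omega : 1 ≤ d * s + B)] at hAB ⊢
  linear_combination hAB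

theorem even_sum_choose_reflect (hA : Even A) (hB : Even B) (hAB : d + 2 = A * B) (s : ℕ) :
    Even (∑ l ∈ Icc 1 s, ∑ j ∈ Icc 1 (A - 2), (d * s + B - 1).choose (d * l - B * j)) := by
  have hd : Even d := by
    have := hB.mul_left A
    rw [← hAB] at this
    exact (Nat.even_add.mp this).mpr even_two
  rw [← sum_product']
  refine even_sum_of_involution (fun p => (s + 1 - p.1, A - 1 - p.2)) ?_ ?_ ?_ ?_ <;>
    rintro ⟨l, j⟩ hlj <;> obtain ⟨hl, hj⟩ := mem_product.mp hlj
  · simp only [mem_product, mem_Icc] at hl hj ⊢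
    omega
  · simp only [mem_Icc, Prod.mk.injEq] at hl hj ⊢
    omega
  · have : A - 1 - j ≠ j := by
      simp only [mem_Icc] at hj
      obtain ⟨a, rfl⟩ := hA
      omega
    simp [this]
  · apply Nat.even_choose_add_choose _ _ (lower_index_add_reflect_add_one hAB hl hj)
    · have hB₀ := pos_of_add_two_eq_mul hAB
      exact Nat.Even.sub_odd (by omega) ((hd.mul_right s).add hB) odd_one
    · exact (hd.mul_right _).tsub (hB.mul_right _)

end

theorem double_sum_choose_even_two_general (g h s d : ℕ) (hg : 1 ≤ g)
    (hd : d = 2 ^ (g + h + 1) - 2) :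
    (∑ l ∈ Finset.Icc 1 s, ∑ j ∈ Finset.Icc 1 (2 ^ g - 2),
      Nat.choose (d * s + 2 ^ (h + 1) - 1) (d * l - 2 ^ (h + 1) * j)) ≡ 0 [MOD 2] := by
  have hAB : d + 2 = 2 ^ g * 2 ^ (h + 1) := by
    rw [← pow_add, hd, show g + (h + 1) = g + h + 1 by ring]
    have : 2 ≤ 2 ^ (g + h + 1) := Nat.le_self_pow (by omega) 2
    omega
  rw [Nat.modEq_zero_iff_dvd, ← even_iff_two_dvd]
  exact even_sum_choose_reflect ((Nat.even_pow' (by omega)).mpr even_two)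
    ((Nat.even_pow' (by omega)).mpr even_two) hAB s

/-- For `g, h, s ≥ 1` and `d = 2^(g+h+1) - 2`:
`∑_{l=1}^{s} ∑_{j=1}^{2^g-2} C(ds + 2^(h+1) - 1, dl - 2^(h+1) j) ≡ 0 (mod 2)`. -/
theorem double_sum_choose_even_two (g h s d : ℕ) (hg : 1 ≤ g) (hh : 1 ≤ h) (hs : 1 ≤ s)
    (hd : d = 2 ^ (g + h + 1) - 2) :
    (∑ l ∈ Finset.Icc 1 s, ∑ j ∈ Finset.Icc 1 (2 ^ g - 2),
      Nat.choose (d * s + 2 ^ (h + 1) - 1) (d * l - 2 ^ (h + 1) * j)) ≡ 0 [MOD 2] :=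
  double_sum_choose_even_two_general g h s d hg hd
end

section
/- Let h ≥ 1, set q = 2^h, and let s be an integer with 1 ≤ s ≤ h. Then C(6q - 3, 2^s) + C(6q - 3, 2q + 2^s - 1) + C(6q - 3, 4q + 2^s - 2) ≡ 1 (mod 2). -/
/-! By Lucas' theorem, `C(n, k)` is odd exactly when every binary digit of `k` is a binary digit
of `n`. With `q = 2^h`, the digits of `6q - 3 = 4q + (2q - 4) + 1` sit at positions `0`, `2, …, h`
and `h + 2`. The index `2q + 2^s - 1` has digit `h + 1`, so the middle term is always even. If
`s = 1`, the first term `C(6q - 3, 2)` is even and the last one, `C(6q - 3, 4q)`, is odd; if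
`s ≥ 2`, the first term is odd and `4q + 2^s - 2` has digit `1`, so the last term is even. -/

namespace Nat

theorem odd_choose_iff_forall_testBit (n k : ℕ) :
    Odd (n.choose k) ↔ ∀ i, k.testBit i → n.testBit i := by
  induction n using Nat.strong_induction_on generalizing k with
  | _ n ih =>
  rcases n.eq_zero_or_pos with rfl | hn
  · rcases k.eq_zero_or_pos with rfl | hk
    · simp
    · obtain ⟨i, hi⟩ := exists_testBit_of_ne_zero hk.ne'
      simpa [choose_eq_zero_of_lt hk] using ⟨i, hi⟩
  have hlucas : n.choose k ≡ (n % 2).choose (k % 2) * (n / 2).choose (k / 2) [MOD 2] :=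
    Choose.choose_modEq_choose_mod_mul_choose_div_nat
  have hlow : Odd ((n % 2).choose (k % 2)) ↔ (k.testBit 0 → n.testBit 0) := by
    rcases mod_two_eq_zero_or_one n with hn2 | hn2 <;>
      rcases mod_two_eq_zero_or_one k with hk2 | hk2 <;> simp [hn2, hk2]
  rw [odd_iff, hlucas, ← odd_iff, odd_mul, hlow, ih _ (div_lt_self hn one_lt_two)]
  simp only [testBit_div_two]
  constructor
  · rintro ⟨h0, hsucc⟩ (_ | i)
    exacts [h0, hsucc i]
  · exact fun h => ⟨h 0, fun i => h (i + 1)⟩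

theorem odd_choose_two_pow_iff (n j : ℕ) : Odd (n.choose (2 ^ j)) ↔ n.testBit j := by
  simp [odd_choose_iff_forall_testBit, testBit_two_pow]

theorem even_choose_of_testBit {n k i : ℕ} (hk : k.testBit i) (hn : ¬n.testBit i) :
    Even (n.choose k) := by
  rw [← not_odd_iff_even, odd_choose_iff_forall_testBit]
  exact fun h => hn (h i hk)

theorem testBit_two_pow_add_self {i x : ℕ} (hx : x < 2 ^ i) : (2 ^ i + x).testBit i := by
  rw [testBit_two_pow_add_eq, testBit_lt_two_pow hx]
  rfl

theorem testBit_six_mul_two_pow_sub_three {h : ℕ} (hh : 1 ≤ h) (j : ℕ) :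
    (6 * 2 ^ h - 3).testBit j ↔ j = 0 ∨ 2 ≤ j ∧ j ≤ h ∨ j = h + 2 := by
  obtain ⟨m, rfl⟩ : ∃ m, h = m + 1 := ⟨h - 1, by omega⟩
  have hpos : 1 ≤ 2 ^ m := Nat.one_le_two_pow
  have hdigits : 6 * 2 ^ (m + 1) - 3 = 2 ^ 2 * (2 ^ (m + 1) * 1 + (2 ^ m - 1)) + 1 := by
    rw [pow_succ]; omega
  have hlow : 2 ^ m - 1 < 2 ^ (m + 1) := by rw [pow_succ]; omega
  rw [hdigits, testBit_two_pow_mul_add _ (by norm_num), testBit_two_pow_mul_add _ hlow]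
  split_ifs <;>
    simp only [testBit_one_eq_true_iff_self_eq_zero, testBit_two_pow_sub_one, decide_eq_true_eq] <;>
    omega

end Nat

/-- For `q = 2^h`, `1 ≤ s ≤ h`:
`C(6q-3, 2^s) + C(6q-3, 2q + 2^s - 1) + C(6q-3, 4q + 2^s - 2) ≡ 1 (mod 2)`. -/
theorem three_choose_sum_odd (h s q : ℕ) (hh : 1 ≤ h) (hq : q = 2 ^ h)
    (hs1 : 1 ≤ s) (hsh : s ≤ h) :
    Nat.choose (6 * q - 3) (2 ^ s) + Nat.choose (6 * q - 3) (2 * q + 2 ^ s - 1) +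
      Nat.choose (6 * q - 3) (4 * q + 2 ^ s - 2) ≡ 1 [MOD 2] := by
  subst hq
  have hbit := Nat.testBit_six_mul_two_pow_sub_three hh
  have hpow_s : 2 ≤ 2 ^ s := by simpa using Nat.pow_le_pow_right two_pos hs1
  have hpow_h : 2 ^ s ≤ 2 ^ h := Nat.pow_le_pow_right two_pos hsh
  have hmid : Even ((6 * 2 ^ h - 3).choose (2 * 2 ^ h + 2 ^ s - 1)) := by
    refine Nat.even_choose_of_testBit (i := h + 1) ?_ ((hbit _).not.mpr (by omega))
    rw [show 2 * 2 ^ h + 2 ^ s - 1 = 2 ^ (h + 1) + (2 ^ s - 1) by rw [pow_succ]; omega]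
    exact Nat.testBit_two_pow_add_self (by rw [pow_succ]; omega)
  rcases hs1.eq_or_lt with rfl | hs2
  · have hfirst : Even ((6 * 2 ^ h - 3).choose (2 ^ 1)) := by
      rw [← Nat.not_odd_iff_even, Nat.odd_choose_two_pow_iff, hbit]; omega
    have hlast : Odd ((6 * 2 ^ h - 3).choose (4 * 2 ^ h + 2 ^ 1 - 2)) := by
      rw [show 4 * 2 ^ h + 2 ^ 1 - 2 = 2 ^ (h + 2) by rw [pow_add]; omega,
        Nat.odd_choose_two_pow_iff, hbit]
      omega
    exact Nat.odd_iff.mp ((hfirst.add hmid).add_odd hlast)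
  · have hfirst : Odd ((6 * 2 ^ h - 3).choose (2 ^ s)) := by
      rw [Nat.odd_choose_two_pow_iff, hbit]; omega
    have hlast : Even ((6 * 2 ^ h - 3).choose (4 * 2 ^ h + 2 ^ s - 2)) := by
      refine Nat.even_choose_of_testBit (i := 1) ?_ ((hbit 1).not.mpr (by omega))
      obtain ⟨t, rfl⟩ : ∃ t, s = t + 2 := ⟨s - 2, by omega⟩
      rw [show 4 * 2 ^ h + 2 ^ (t + 2) - 2 = 2 ^ 2 * (2 ^ h + 2 ^ t - 1) + 2 by
          have := Nat.one_le_two_pow (n := t); rw [pow_add]; omega,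
        Nat.testBit_two_pow_mul_add _ (by norm_num)]
      rfl
    exact Nat.odd_iff.mp ((hfirst.add_even hmid).add_even hlast)
end

section
/- Let λ ≥ 0 be an integer and let r ≥ 1 be an odd integer. Then Σ_{j=0}^{2^λ} C(2^λ·(r+1), j) is odd. -/
namespace Nat

theorem dvd_choose_mul_self (n k : ℕ) : n ∣ n.choose k * k := by
  rcases n with _ | n
  · rcases k with _ | k <;> simp
  · rcases k with _ | k
    · simp
    · exact ⟨n.choose k, (add_one_mul_choose_eq n k).symm⟩

/-- Since `p ^ k` divides `C(p ^ k * m, j) * j` but not `j`, it cannot be coprime to the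
binomial coefficient. -/
theorem Prime.dvd_choose_pow_mul {p k m j : ℕ} (hp : p.Prime) (hj0 : j ≠ 0) (hj : j < p ^ k) :
    p ∣ (p ^ k * m).choose j := by
  by_contra hndvd
  have hcop : Coprime (p ^ k) ((p ^ k * m).choose j) :=
    (hp.coprime_iff_not_dvd.2 hndvd).pow_left k
  have hdvd : p ^ k ∣ j :=
    hcop.dvd_of_dvd_mul_left ((dvd_mul_right _ m).trans (dvd_choose_mul_self _ j))
  exact (Nat.le_of_dvd (pos_of_ne_zero hj0) hdvd).not_gt hj

end Nat

theorem sum_choose_odd_general (l r : ℕ) (hr : Odd r) :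
    Odd (∑ j ∈ Finset.range (2 ^ l + 1), Nat.choose (2 ^ l * (r + 1)) j) := by
  obtain ⟨m, rfl⟩ := hr
  have hn : 2 ^ l * (2 * m + 1 + 1) = 2 ^ (l + 1) * (m + 1) := by ring
  have hpositive_terms :
      Even (∑ i ∈ Finset.range (2 ^ l), (2 ^ l * (2 * m + 1 + 1)).choose (i + 1)) := by
    refine Finset.even_sum _ fun i hi => ?_
    have hi' : i + 1 < 2 ^ (l + 1) := by
      rw [Finset.mem_range] at hi
      rw [pow_succ]
      omega
    rw [hn, even_iff_two_dvd]
    exact Nat.prime_two.dvd_choose_pow_mul i.succ_ne_zero hi'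
  rw [Finset.sum_range_succ', Nat.choose_zero_right]
  exact hpositive_terms.add_one

/-- For `λ ≥ 0` and odd `r ≥ 1`, the sum `∑_{j=0}^{2^λ} C(2^λ·(r+1), j)` is odd. -/
theorem sum_choose_odd (l r : ℕ) (hr1 : 1 ≤ r) (hr : Odd r) :
    Odd (∑ j ∈ Finset.range (2 ^ l + 1), Nat.choose (2 ^ l * (r + 1)) j) :=
  sum_choose_odd_general l r hr
end

section
/- Let g ≥ 2, h ≥ 1, set q = 2^h, let c be an integer with 1 ≤ c ≤ g-1, and set i = 2^g - 1 - 2^c. Then C(2q·(i+2) + 2q - 2, 2q) is odd, and for every integer j with 0 ≤ j ≤ i one has C(2q·(i+2) + 2q - 2, 2q·(j+1) + 2q - 2) ≡ C(i+2, j+1) (mod 2). -/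
/-!
Since `2q = 2^(h+1)`, both binomial coefficients have the shape
`C(a·2q + (2q-2), c·2q + d)` with `d ∈ {0, 2q-2}`, and Lucas's theorem splits off the low base-2
digits: the coefficient is `≡ C(a, c) · C(2q-2, d)`. This gives `C(i+2, 1) = i+2` in the first case
and `C(i+2, j+1)` in the second; and `i+2` is odd because `2^g - 2^c` is even.
-/

open Nat

namespace Choose

theorem choose_mul_pow_add_mul_pow_add_modEq {p : ℕ} [Fact p.Prime] (k : ℕ) {a b c d : ℕ}
    (hb : b < p ^ k) (hd : d < p ^ k) :
    choose (a * p ^ k + b) (c * p ^ k + d) ≡ choose a c * choose b d [MOD p] := by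
  induction k generalizing b d with
  | zero =>
    obtain rfl : b = 0 := by simpa using hb
    obtain rfl : d = 0 := by simpa using hd
    simp [Nat.ModEq.refl]
  | succ k ih =>
    have hp : 0 < p := Nat.Prime.pos Fact.out
    have lowest_digit : ∀ x y, y < p ^ (k + 1) →
        (x * p ^ (k + 1) + y) % p = y % p ∧ (x * p ^ (k + 1) + y) / p = x * p ^ k + y / p ∧
          y / p < p ^ k := fun x y hy => by
      rw [pow_succ, ← mul_assoc, mul_comm _ p]
      refine ⟨Nat.mul_add_mod_self_left .., Nat.mul_add_div hp .., ?_⟩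
      rwa [Nat.div_lt_iff_lt_mul hp, ← pow_succ]
    obtain ⟨hbmod, hbdiv, hb'⟩ := lowest_digit a b hb
    obtain ⟨hdmod, hddiv, hd'⟩ := lowest_digit c d hd
    calc choose (a * p ^ (k + 1) + b) (c * p ^ (k + 1) + d)
        ≡ choose (b % p) (d % p) * choose (a * p ^ k + b / p) (c * p ^ k + d / p) [MOD p] := by
          rw [← hbmod, ← hdmod, ← hbdiv, ← hddiv]
          exact choose_modEq_choose_mod_mul_choose_div_nat
      _ ≡ choose (b % p) (d % p) * (choose a c * choose (b / p) (d / p)) [MOD p] :=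
          (ih hb' hd').mul_left _
      _ = choose a c * (choose (b % p) (d % p) * choose (b / p) (d / p)) := by ring
      _ ≡ choose a c * choose b d [MOD p] :=
          choose_modEq_choose_mod_mul_choose_div_nat.symm.mul_left _

end Choose

theorem Nat.odd_two_pow_sub_one_sub_two_pow {g c : ℕ} (hc : c ≠ 0) (hcg : c < g) :
    Odd (2 ^ g - 1 - 2 ^ c) := by
  rw [Nat.sub_sub]
  exact Nat.Even.sub_odd (Nat.one_add_le_iff.2 (Nat.pow_lt_pow_right one_lt_two hcg))
    (Nat.even_pow.2 ⟨even_two, by omega⟩) (Nat.even_pow.2 ⟨even_two, hc⟩).one_add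

theorem choose_odd_and_congr_general (g h q c i : ℕ) (hq : q = 2 ^ h)
    (hc1 : 1 ≤ c) (hc2 : c ≤ g - 1) (hi : i = 2 ^ g - 1 - 2 ^ c) :
    Odd (Nat.choose (2 * q * (i + 2) + 2 * q - 2) (2 * q)) ∧
    ∀ j ≤ i, Nat.choose (2 * q * (i + 2) + 2 * q - 2) (2 * q * (j + 1) + 2 * q - 2) ≡
      Nat.choose (i + 2) (j + 1) [MOD 2] := by
  rw [hq, ← pow_succ']
  have hlt : 2 ^ (h + 1) - 2 < 2 ^ (h + 1) := Nat.sub_lt (by positivity) two_pos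
  have hsplit : ∀ x, 2 ^ (h + 1) * x + 2 ^ (h + 1) - 2 = x * 2 ^ (h + 1) + (2 ^ (h + 1) - 2) :=
    fun x => by rw [mul_comm, Nat.add_sub_assoc (Nat.le_self_pow (by omega) 2)]
  refine ⟨?_, fun j _ => ?_⟩
  · have hodd : Odd (i + 2) :=
      hi ▸ (Nat.odd_two_pow_sub_one_sub_two_pow (by omega) (by omega)).add_even even_two
    have key := Choose.choose_mul_pow_add_mul_pow_add_modEq (a := i + 2) (c := 1) (h + 1) hlt
      (Nat.two_pow_pos _)
    rw [one_mul, add_zero, choose_one_right, choose_zero_right, mul_one] at key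
    rw [hsplit, Nat.odd_iff, key]
    exact Nat.odd_iff.1 hodd
  · rw [hsplit, hsplit]
    simpa using Choose.choose_mul_pow_add_mul_pow_add_modEq (a := i + 2) (c := j + 1) (h + 1) hlt hlt

/-- For `g ≥ 2`, `q = 2^h`, `1 ≤ c ≤ g-1` and `i = 2^g - 1 - 2^c`:
`C(2q(i+2) + 2q - 2, 2q)` is odd and, for all `0 ≤ j ≤ i`,
`C(2q(i+2) + 2q - 2, 2q(j+1) + 2q - 2) ≡ C(i+2, j+1) (mod 2)`. -/
theorem choose_odd_and_congr (g h q c i : ℕ) (hg : 2 ≤ g) (hh : 1 ≤ h) (hq : q = 2 ^ h)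
    (hc1 : 1 ≤ c) (hc2 : c ≤ g - 1) (hi : i = 2 ^ g - 1 - 2 ^ c) :
    Odd (Nat.choose (2 * q * (i + 2) + 2 * q - 2) (2 * q)) ∧
    ∀ j ≤ i, Nat.choose (2 * q * (i + 2) + 2 * q - 2) (2 * q * (j + 1) + 2 * q - 2) ≡
      Nat.choose (i + 2) (j + 1) [MOD 2] :=
  choose_odd_and_congr_general g h q c i hq hc1 hc2 hi
end

section
/- Let g ≥ 1, h ≥ 1, set q = 2^h, η = 2^g - 1 and N = 2q·(η+1) + 2q - 2. For t ∈ {0,1} define a_t = C(N, t) + C(N, 2q - 1 + t) + C(N, 4q - 2 + t) + Σ_{i=1}^{η-1} C(N, 2q·(i+1) + 2q - 2 + t), b = C(N, 2q - 2) + C(N, 4q - 3) + Σ_{i=1}^{η-1} C(N, 2q·(i+1) + 2q - 3), and c_t = C(N, N - 2 + t). Then a_0 ≡ 1, a_1 ≡ 0, b + c_0 ≡ 0 and b + c_1 ≡ 1, all modulo 2. -/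
/-!
Put `Q = 2q = 2^(h+1)`, so that `N = Q * 2^g + (Q - 2)`. Lucas's theorem in base `Q` gives
`C(N, Q b + s) ≡ C(Q - 2, s) * C(2^g, b)`, and `C(2^g, b)` is even for `0 < b < 2^g`; so among
the even indices only `C(N, 0)` and `C(N, Q - 2)` are odd, while `C(N, k)` is even for every odd
`k` because `N` is even. Finally `C(N, N - 2) = C(N, 2) ≡ N / 2`, which is odd as `N ≡ 2 mod 4`.
-/

namespace Choose

variable {p : ℕ} [Fact p.Prime]

theorem choose_modEq_choose_mod_pow_mul_choose_div_pow_nat (n k m : ℕ) :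
    n.choose k ≡ (n % p ^ m).choose (k % p ^ m) * (n / p ^ m).choose (k / p ^ m) [MOD p] := by
  induction m generalizing n k with
  | zero => simp only [pow_zero, Nat.mod_one, Nat.div_one, Nat.choose_self, one_mul]; rfl
  | succ m ih =>
    have hlow := choose_modEq_choose_mod_mul_choose_div_nat (p := p) (n := n % p ^ (m + 1))
      (k := k % p ^ (m + 1))
    simp only [pow_succ', Nat.mod_mul_right_div_self, Nat.mod_mul_right_mod,
      ← Nat.div_div_eq_div_mul] at hlow ⊢
    calc n.choose k
        ≡ (n % p).choose (k % p) * (n / p).choose (k / p) [MOD p] :=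
          choose_modEq_choose_mod_mul_choose_div_nat
      _ ≡ (n % p).choose (k % p) * ((n / p % p ^ m).choose (k / p % p ^ m) *
            (n / p / p ^ m).choose (k / p / p ^ m)) [MOD p] := (ih _ _).mul_left _
      _ ≡ _ [MOD p] := by rw [← mul_assoc]; exact hlow.symm.mul_right _

theorem choose_pow_mul_add_self_modEq_one {m r : ℕ} (hr : r < p ^ m) (a : ℕ) :
    (p ^ m * a + r).choose r ≡ 1 [MOD p] := by
  have hpos : 0 < p ^ m := Nat.pos_of_ne_zero (pow_ne_zero _ (Fact.out : p.Prime).ne_zero)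
  simpa [Nat.mul_add_div hpos, Nat.mod_eq_of_lt hr, Nat.div_eq_of_lt hr] using
    choose_modEq_choose_mod_pow_mul_choose_div_pow_nat (p := p) (p ^ m * a + r) r m

end Choose

namespace Nat

theorem two_dvd_choose_of_even_of_odd {n k : ℕ} (hn : Even n) (hk : Odd k) :
    2 ∣ n.choose k := by
  have := Choose.choose_modEq_choose_mod_mul_choose_div_nat (p := 2) (n := n) (k := k)
  rw [Nat.even_iff.mp hn, Nat.odd_iff.mp hk] at this
  simpa [Nat.ModEq, Nat.dvd_iff_mod_eq_zero] using this

theorem choose_two_modEq_div_two {n : ℕ} (hn : Even n) : n.choose 2 ≡ n / 2 [MOD 2] := by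
  obtain ⟨a, rfl⟩ := hn
  simpa [← two_mul] using Choose.choose_mul_mul_modEq_choose_nat (p := 2) (a := a) (b := 1)

theorem two_dvd_choose_two_pow_mul_two_pow_add {m g r k : ℕ} (hr : r < 2 ^ m)
    (hk₀ : 2 ^ m ≤ k) (hk : k < 2 ^ m * 2 ^ g) : 2 ∣ (2 ^ m * 2 ^ g + r).choose k := by
  have hpos : 0 < 2 ^ m := Nat.two_pow_pos m
  have hlucas := Choose.choose_modEq_choose_mod_pow_mul_choose_div_pow_nat (p := 2)
    (2 ^ m * 2 ^ g + r) k m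
  rw [Nat.mul_add_mod, Nat.mod_eq_of_lt hr, Nat.mul_add_div hpos, Nat.div_eq_of_lt hr,
    add_zero] at hlucas
  refine Nat.modEq_zero_iff_dvd.mp (hlucas.trans (Nat.modEq_zero_iff_dvd.mpr ?_))
  refine dvd_mul_of_dvd_right (Nat.prime_two.dvd_choose_pow ?_ ?_) _
  · exact (Nat.div_pos hk₀ hpos).ne'
  · exact (Nat.div_lt_of_lt_mul hk).ne

end Nat

section

variable {m g q η N : ℕ}

theorem two_dvd_choose_of_two_mul_le_of_lt (hQ : 2 * q = 2 ^ m) (hη : η + 1 = 2 ^ g)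
    (hN : N = 2 * q * (η + 1) + 2 * q - 2) {k : ℕ} (hk₀ : 2 * q ≤ k)
    (hk : k < 2 * q * (η + 1)) : 2 ∣ N.choose k := by
  have : 1 ≤ 2 ^ m := Nat.one_le_two_pow
  rw [show N = 2 ^ m * 2 ^ g + (2 * q - 2) by rw [← hQ, ← hη]; omega]
  exact Nat.two_dvd_choose_two_pow_mul_two_pow_add (by omega) (hQ ▸ hk₀) (hQ ▸ hη ▸ hk)

theorem two_dvd_sum_choose (hQ : 2 * q = 2 ^ m) (hη : η + 1 = 2 ^ g)
    (hN : N = 2 * q * (η + 1) + 2 * q - 2) (k : ℕ → ℕ)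
    (hk : ∀ i, 2 * q * (i + 1) ≤ k i ∧ k i < 2 * q * (i + 1) + 2 * q) :
    2 ∣ ∑ i ∈ Finset.Icc 1 (η - 1), N.choose (k i) := by
  refine Finset.dvd_sum fun i hi => ?_
  have hi' := Finset.mem_Icc.mp hi
  have hki := hk i
  have : 2 * q ≤ 2 * q * (i + 1) := Nat.le_mul_of_pos_right _ (by omega)
  have : 2 * q * (i + 1) + 2 * q ≤ 2 * q * (η + 1) := by
    rw [← mul_add_one]; exact Nat.mul_le_mul_left _ (by omega)
  exact two_dvd_choose_of_two_mul_le_of_lt hQ hη hN (by omega) (by omega)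

theorem choose_two_mul_sub_two_modEq_one (hQ : 2 * q = 2 ^ m)
    (hN : N = 2 * q * (η + 1) + 2 * q - 2) : N.choose (2 * q - 2) ≡ 1 [MOD 2] := by
  have : 1 ≤ 2 ^ m := Nat.one_le_two_pow
  rw [show N = 2 ^ m * (η + 1) + (2 * q - 2) by rw [← hQ]; omega]
  exact Choose.choose_pow_mul_add_self_modEq_one (by omega) _

theorem choose_sub_two_modEq_one (hq₀ : q ≠ 0) (hq : 2 ∣ q)
    (hN : N = 2 * q * (η + 1) + 2 * q - 2) : N.choose (N - 2) ≡ 1 [MOD 2] := by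
  have : 4 ∣ 2 * q * (η + 1) := (mul_dvd_mul_left 2 hq).mul_right _
  rw [Nat.choose_symm (by omega)]
  refine (Nat.choose_two_modEq_div_two (Nat.even_iff.mpr (by omega))).trans ?_
  unfold Nat.ModEq
  omega

end

/-- For `q = 2^h`, `η = 2^g - 1`, `N = 2q(η+1) + 2q - 2` and the coefficients
`a_t`, `b`, `c_t` as defined: `a_0 ≡ 1`, `a_1 ≡ 0`, `b + c_0 ≡ 0`, `b + c_1 ≡ 1` mod 2. -/
theorem coefficients_parity (g h q η N : ℕ) (hg : 1 ≤ g) (hh : 1 ≤ h)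
    (hq : q = 2 ^ h) (hη : η = 2 ^ g - 1) (hN : N = 2 * q * (η + 1) + 2 * q - 2)
    (a c : ℕ → ℕ) (b : ℕ)
    (ha : ∀ t, a t = Nat.choose N t + Nat.choose N (2 * q - 1 + t) +
      Nat.choose N (4 * q - 2 + t) +
      ∑ i ∈ Finset.Icc 1 (η - 1), Nat.choose N (2 * q * (i + 1) + 2 * q - 2 + t))
    (hb : b = Nat.choose N (2 * q - 2) + Nat.choose N (4 * q - 3) +
      ∑ i ∈ Finset.Icc 1 (η - 1), Nat.choose N (2 * q * (i + 1) + 2 * q - 3))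
    (hc : ∀ t, c t = Nat.choose N (N - 2 + t)) :
    a 0 ≡ 1 [MOD 2] ∧ a 1 ≡ 0 [MOD 2] ∧ b + c 0 ≡ 0 [MOD 2] ∧ b + c 1 ≡ 1 [MOD 2] := by
  have hQ : 2 * q = 2 ^ (h + 1) := by rw [hq, pow_succ, mul_comm]
  have hη₁ : η + 1 = 2 ^ g := by have := Nat.one_le_two_pow (n := g); omega
  have h4q : 2 * q * 2 ≤ 2 * q * (η + 1) :=
    Nat.mul_le_mul_left _ (hη₁ ▸ Nat.le_self_pow (by omega) 2)
  have hq₁ : 2 ≤ q := hq ▸ Nat.le_self_pow (by omega) 2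
  have hq₂ : 2 ∣ q := hq ▸ dvd_pow_self 2 (by omega)
  have h2N : 2 ∣ 2 * q * (η + 1) := (dvd_mul_right 2 q).mul_right _
  have hodd : ∀ k, Odd k → 2 ∣ N.choose k := fun _ =>
    Nat.two_dvd_choose_of_even_of_odd (Nat.even_iff.mpr (by omega))
  have hblock : ∀ k, 2 * q ≤ k → k < 2 * q * (η + 1) → 2 ∣ N.choose k := fun _ =>
    two_dvd_choose_of_two_mul_le_of_lt hQ hη₁ hN
  have hsum := two_dvd_sum_choose hQ hη₁ hN
  have ha₀ : a 0 % 2 = 1 := by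
    have := hodd (2 * q - 1) ⟨q - 1, by omega⟩
    have := hblock (4 * q - 2) (by omega) (by omega)
    have := hsum (fun i => 2 * q * (i + 1) + 2 * q - 2) fun _ => by omega
    simp only [ha, add_zero, Nat.choose_zero_right]
    omega
  have ha₁ : a 1 % 2 = 0 := by
    have := hodd 1 odd_one
    have := hblock (2 * q - 1 + 1) (by omega) (by omega)
    have := hblock (4 * q - 2 + 1) (by omega) (by omega)
    have := hsum (fun i => 2 * q * (i + 1) + 2 * q - 2 + 1) fun _ => by omega
    rw [ha]
    omega
  have hb₁ : b % 2 = 1 := by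
    have : N.choose (2 * q - 2) % 2 = 1 := choose_two_mul_sub_two_modEq_one hQ hN
    have := hblock (4 * q - 3) (by omega) (by omega)
    have := hsum (fun i => 2 * q * (i + 1) + 2 * q - 3) fun _ => by omega
    rw [hb]
    omega
  have hc₀ : c 0 % 2 = 1 := hc 0 ▸ choose_sub_two_modEq_one (by omega) hq₂ hN
  have hc₁ : c 1 % 2 = 0 := hc 1 ▸ Nat.mod_eq_zero_of_dvd (hodd _ ⟨N / 2 - 1, by omega⟩)
  unfold Nat.ModEq
  omega
end
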